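/- Let v be a C² function on an open subset of ℝⁿ, f a C² function on ℝ, and for y = (y₁,…,y_n,y_{n+1}) with y_{n+1} > 0 set ỹ = (y₁/y_{n+1},…,y_n/y_{n+1}) and φ(y) = f(y_{n+1} v(ỹ)). Then the determinant of the (n+1)×(n+1) Hessian of φ satisfies det D²φ(y) = f''(y_{n+1}v(ỹ)) · (f'(y_{n+1}v(ỹ)))ⁿ · v(ỹ)² · y_{n+1}^{−n} · det D²v(ỹ). -/

import Mathlib

open Set MeasureTheory Metric Bornology
open scoped RealInnerProductSpace NNReal Topology

noncomputable section

abbrev Eu (n : ℕ) := EuclideanSpace ℝ (Fin n)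

/-- The Hessian matrix of second partial derivatives of a function on `ℝᵐ`. -/
def Hess {m : ℕ} (f : Eu m → ℝ) (y : Eu m) : Matrix (Fin m) (Fin m) ℝ :=
  fun i j =>
    fderiv ℝ (fun z => fderiv ℝ f z (EuclideanSpace.single i (1:ℝ))) y
      (EuclideanSpace.single j (1:ℝ))

/-- The first `n` coordinates `ȳ` of a point of `ℝ^{n+1}`. -/
def bar {n : ℕ} (y : Eu (n + 1)) : Eu n := WithLp.toLp 2 (fun i : Fin n => y i.castSucc)

/-- The last coordinate `y_{n+1}` of a point of `ℝ^{n+1}`. -/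
def lastc {n : ℕ} (y : Eu (n + 1)) : ℝ := y (Fin.last n)

/-- The rescaled point `ỹ = ȳ / y_{n+1}` on the link. -/
def tilde {n : ℕ} (y : Eu (n + 1)) : Eu n := (lastc y)⁻¹ • bar y

/-!
Write `φ = f ∘ g`, where `g(y) = y_{n+1} v(ỹ)` is the perspective of `v`. With
`P = [I | -ỹ]`, the differential of `ỹ` is `y_{n+1}⁻¹ P`, and since `g` is `1`-homogeneous the
first-order terms cancel in `D²g = y_{n+1}⁻¹ Pᵀ D²v(ỹ) P`. Hence
`D²φ = f'' ∇g ∇gᵀ + f' y_{n+1}⁻¹ Pᵀ D²v(ỹ) P = Rᵀ diag(f' y_{n+1}⁻¹ D²v(ỹ), f'') R`, where the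
square matrix `R` has the rows of `P` and then `∇g = (∇v(ỹ), v(ỹ) - ỹ · ∇v(ỹ))`; a Schur complement
gives `det R = v(ỹ)`.
-/

open Matrix

section ContDiff

variable {𝕜 E F : Type*} [NontriviallyNormedField 𝕜] [NormedAddCommGroup E] [NormedSpace 𝕜 E]
  [NormedAddCommGroup F] [NormedSpace 𝕜 F] {f : E → F} {x : E}

theorem ContDiffAt.eventually_differentiableAt {n : ℕ} (h : ContDiffAt 𝕜 n f x) (hn : n ≠ 0) :
    ∀ᶠ y in 𝓝 x, DifferentiableAt 𝕜 f y :=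
  (h.eventually (by simp)).mono fun _ hy => hy.differentiableAt (by exact_mod_cast hn)

theorem ContDiffAt.differentiableAt_fderiv (h : ContDiffAt 𝕜 2 f x) :
    DifferentiableAt 𝕜 (fderiv 𝕜 f) x :=
  (h.fderiv_right (m := 1) le_rfl).differentiableAt one_ne_zero

end ContDiff

section SecondDerivative

variable {F : Type*} [NormedAddCommGroup F] [NormedSpace ℝ F]

theorem hasFDerivAt_fderiv_comp_apply {f : ℝ → ℝ} {g : F → ℝ} {y u : F} {D : F →L[ℝ] ℝ}
    (hf : ContDiffAt ℝ 2 f (g y)) (hg : ∀ᶠ z in 𝓝 y, DifferentiableAt ℝ g z)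
    (hgu : HasFDerivAt (fun z => fderiv ℝ g z u) D y) :
    HasFDerivAt (fun z => fderiv ℝ (fun w => f (g w)) z u)
      (deriv f (g y) • D + (deriv (deriv f) (g y) * fderiv ℝ g y u) • fderiv ℝ g y) y := by
  have hgy := hg.self_of_nhds
  have hformula : (fun z => fderiv ℝ (fun w => f (g w)) z u) =ᶠ[𝓝 y]
      fun z => deriv f (g z) * fderiv ℝ g z u := by
    filter_upwards [hgy.continuousAt.tendsto.eventually (hf.eventually_differentiableAt two_ne_zero),
      hg] with z hfz hgz
    have hfg : HasFDerivAt (fun w => f (g w)) (deriv f (g z) • fderiv ℝ g z) z :=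
      hfz.hasDerivAt.comp_hasFDerivAt z hgz.hasFDerivAt
    rw [hfg.fderiv]
    rfl
  have hf' : HasDerivAt (deriv f) (deriv (deriv f) (g y)) (g y) :=
    (hf.differentiableAt_fderiv.clm_apply (differentiableAt_const 1)).hasDerivAt
  refine (((hf'.comp_hasFDerivAt y hgy.hasFDerivAt).mul hgu).congr_fderiv ?_).congr_of_eventuallyEq
    hformula
  ext w
  simp only [Function.comp_apply, _root_.add_apply, _root_.smul_apply, smul_eq_mul]
  ring

end SecondDerivative

section Perspective

variable {E F : Type*} [NormedAddCommGroup E] [NormedSpace ℝ E] [NormedAddCommGroup F]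
  [NormedSpace ℝ F] (B : F →L[ℝ] E) (L : F →L[ℝ] ℝ)

/-- For `B = barL n`, `L = lastL n` this is `tilde`, and `perspLin B L y` is the matrix
`[I | -ỹ]`. -/
def persp (z : F) : E := (L z)⁻¹ • B z

def perspLin (z : F) : F →L[ℝ] E := B - L.smulRight (persp B L z)

variable {B L}

theorem hasFDerivAt_persp {z : F} (hz : L z ≠ 0) :
    HasFDerivAt (persp B L) ((L z)⁻¹ • perspLin B L z) z := by
  have hinv : HasFDerivAt (fun w => (L w)⁻¹) (-(L z ^ 2)⁻¹ • L) z :=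
    (hasDerivAt_inv hz).comp_hasFDerivAt z L.hasFDerivAt
  refine (hinv.smul B.hasFDerivAt).congr_fderiv ?_
  ext w
  simp only [_root_.add_apply, _root_.smul_apply, _root_.sub_apply, perspLin, persp,
    ContinuousLinearMap.smulRight_apply, smul_eq_mul, neg_mul, neg_smul]
  module

theorem hasFDerivAt_perspective {v : E → ℝ} {v' : E →L[ℝ] ℝ} {z : F} (hz : L z ≠ 0)
    (hv : HasFDerivAt v v' (persp B L z)) :
    HasFDerivAt (fun w => L w * v (persp B L w)) (v' ∘L perspLin B L z + v (persp B L z) • L) z := by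
  refine (L.hasFDerivAt.mul (hv.comp z (hasFDerivAt_persp hz))).congr_fderiv ?_
  ext w
  simp [hz]

theorem eventually_hasFDerivAt_perspective {v : E → ℝ} {y : F} (hy : L y ≠ 0)
    (hv : ∀ᶠ x in 𝓝 (persp B L y), DifferentiableAt ℝ v x) :
    ∀ᶠ z in 𝓝 y, HasFDerivAt (fun w => L w * v (persp B L w))
      (fderiv ℝ v (persp B L z) ∘L perspLin B L z + v (persp B L z) • L) z := by
  filter_upwards [L.continuous.continuousAt.eventually_ne hy,
    (hasFDerivAt_persp (B := B) hy).continuousAt.tendsto.eventually hv] with z hz hvz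
  exact hasFDerivAt_perspective hz hvz.hasFDerivAt

theorem hasFDerivAt_fderiv_perspective_apply {v : E → ℝ} {y : F} (hy : L y ≠ 0)
    (hv : ContDiffAt ℝ 2 v (persp B L y)) (u : F) :
    HasFDerivAt (fun z => fderiv ℝ (fun w => L w * v (persp B L w)) z u)
      ((L y)⁻¹ • ((fderiv ℝ (fderiv ℝ v) (persp B L y)).flip (perspLin B L y u)).comp
        (perspLin B L y)) y := by
  have hpersp := hasFDerivAt_persp (B := B) hy
  have hformula : (fun z => fderiv ℝ (fun w => L w * v (persp B L w)) z u) =ᶠ[𝓝 y]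
      fun z => fderiv ℝ v (persp B L z) (B u - L u • persp B L z) + v (persp B L z) * L u := by
    filter_upwards [eventually_hasFDerivAt_perspective hy (hv.eventually_differentiableAt two_ne_zero)]
      with z hz
    rw [hz.fderiv]
    simp [perspLin]
  have hDv := (hv.differentiableAt_fderiv.hasFDerivAt.comp y hpersp).clm_apply
    ((hasFDerivAt_const (B u) y).sub (hpersp.const_smul (L u)))
  have hv' := ((hv.differentiableAt two_ne_zero).hasFDerivAt.comp y hpersp).mul_const (L u)
  refine ((hDv.add hv').congr_fderiv ?_).congr_of_eventuallyEq hformula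
  ext w
  simp only [perspLin, Function.comp_apply, Pi.sub_apply, Pi.smul_apply, _root_.add_apply,
    _root_.sub_apply, _root_.smul_apply, ContinuousLinearMap.comp_apply,
    ContinuousLinearMap.flip_apply, ContinuousLinearMap.smulRight_apply, _root_.zero_apply, map_zero,
    map_sub, map_smul, smul_eq_mul]
  ring

end Perspective

section MatrixFactorization

theorem Matrix.transpose_mul_mul_apply {R m n : Type*} [CommRing R] [Fintype n]
    (P : Matrix n m R) (H : Matrix n n R) (i j : m) :
    (Pᵀ * H * P) i j = ∑ k, ∑ l, P k i * H k l * P l j := by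
  simp only [mul_apply, transpose_apply, Finset.sum_mul]
  exact Finset.sum_comm

variable {R m n : Type*} [CommRing R] [Fintype m] [Fintype n] [DecidableEq m] [DecidableEq n]

theorem Matrix.det_smul_vecMulVec_add_smul_transpose_mul_mul (e : n ⊕ Fin 1 ≃ m)
    (H : Matrix n n R) (P : Matrix n m R) (γ : m → R) (q c : R) :
    det (q • vecMulVec γ γ + c • (Pᵀ * H * P)) =
      q * c ^ Fintype.card n * det H *
        det ((fromRows P (replicateRow (Fin 1) γ)).submatrix id e) ^ 2 := by
  set T := fromRows P (replicateRow (Fin 1) γ)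
  have hfactor : q • vecMulVec γ γ + c • (Pᵀ * H * P) =
      Tᵀ * fromBlocks (c • H) 0 0 (q • 1 : Matrix (Fin 1) (Fin 1) R) * T := by
    rw [transpose_fromRows, fromCols_mul_fromBlocks, fromCols_mul_fromRows, vecMulVec_eq (Fin 1)]
    simp only [transpose_replicateRow, Matrix.mul_smul, Matrix.smul_mul, Matrix.mul_one,
      Matrix.mul_zero, add_zero, zero_add, Matrix.mul_assoc]
    exact add_comm _ _
  rw [hfactor, ← det_submatrix_equiv_self e, submatrix_mul _ _ _ id _ Function.bijective_id,
    submatrix_mul _ _ _ id _ Function.bijective_id, submatrix_id_id,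
    ← transpose_submatrix T id e, det_mul, det_mul, det_transpose, det_fromBlocks_zero₂₁, det_smul,
    det_smul, det_one, Fintype.card_fin, pow_one, mul_one]
  ring

end MatrixFactorization

section Euclidean

variable {m n : ℕ}

def clmToMatrix (T : Eu m →L[ℝ] Eu n) : Matrix (Fin n) (Fin m) ℝ :=
  of fun k j => T (EuclideanSpace.single j 1) k

theorem ContinuousLinearMap.apply_eq_sum_single {M : Type*} [AddCommMonoid M] [Module ℝ M]
    [TopologicalSpace M] (c : Eu n →L[ℝ] M) (x : Eu n) :
    c x = ∑ i, x i • c (EuclideanSpace.single i 1) := by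
  conv_lhs => rw [← (EuclideanSpace.basisFun (Fin n) ℝ).sum_repr x]
  simp

theorem ContinuousLinearMap.bilinear_apply_eq_sum (A : Eu n →L[ℝ] Eu n →L[ℝ] ℝ) (a b : Eu n) :
    A a b = ∑ k, ∑ l, b k * A (EuclideanSpace.single l 1) (EuclideanSpace.single k 1) * a l := by
  rw [A.apply_eq_sum_single a, _root_.sum_apply, Finset.sum_comm]
  refine Finset.sum_congr rfl fun l _ => ?_
  rw [_root_.smul_apply, (A _).apply_eq_sum_single b, Finset.smul_sum]
  simp only [smul_eq_mul]
  ring_nf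

theorem hess_eq_of_differentiableAt {v : Eu n → ℝ} {x : Eu n}
    (h : DifferentiableAt ℝ (fderiv ℝ v) x) :
    Hess v x = of fun k l =>
      fderiv ℝ (fderiv ℝ v) x (EuclideanSpace.single l 1) (EuclideanSpace.single k 1) := by
  ext k l
  simp [Hess, fderiv_clm_apply h (differentiableAt_const _)]

theorem hess_comp_perspective (B : Eu m →L[ℝ] Eu n) (L : Eu m →L[ℝ] ℝ) {v : Eu n → ℝ}
    {f : ℝ → ℝ} {y : Eu m} (hy : L y ≠ 0) (hv : ContDiffAt ℝ 2 v (persp B L y))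
    (hf : ContDiffAt ℝ 2 f (L y * v (persp B L y))) :
    Hess (fun z => f (L z * v (persp B L z))) y =
      deriv (deriv f) (L y * v (persp B L y)) •
          vecMulVec (fun j => fderiv ℝ (fun z => L z * v (persp B L z)) y (EuclideanSpace.single j 1))
            (fun j => fderiv ℝ (fun z => L z * v (persp B L z)) y (EuclideanSpace.single j 1)) +
        (deriv f (L y * v (persp B L y)) * (L y)⁻¹) •
          ((clmToMatrix (perspLin B L y))ᵀ * Hess v (persp B L y) * clmToMatrix (perspLin B L y)) := by
  have hg : ∀ᶠ z in 𝓝 y, DifferentiableAt ℝ (fun z => L z * v (persp B L z)) z :=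
    (eventually_hasFDerivAt_perspective hy (hv.eventually_differentiableAt two_ne_zero)).mono
      fun z hz => hz.differentiableAt
  ext i j
  rw [Hess, (hasFDerivAt_fderiv_comp_apply (g := fun z => L z * v (persp B L z)) hf hg
      (hasFDerivAt_fderiv_perspective_apply hy hv _)).fderiv,
    hess_eq_of_differentiableAt hv.differentiableAt_fderiv]
  simp only [_root_.add_apply, _root_.smul_apply, ContinuousLinearMap.comp_apply,
    ContinuousLinearMap.flip_apply, Matrix.add_apply, Matrix.smul_apply, vecMulVec_apply,
    transpose_mul_mul_apply, clmToMatrix, of_apply, smul_eq_mul]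
  rw [ContinuousLinearMap.bilinear_apply_eq_sum]
  ring

end Euclidean

section Coordinates

variable {n : ℕ}

def barL (n : ℕ) : Eu (n + 1) →L[ℝ] Eu n :=
  LinearMap.toContinuousLinearMap
    { toFun := bar
      map_add' := fun _ _ => rfl
      map_smul' := fun _ _ => rfl }

def lastL (n : ℕ) : Eu (n + 1) →L[ℝ] ℝ :=
  LinearMap.toContinuousLinearMap
    { toFun := lastc
      map_add' := fun _ _ => rfl
      map_smul' := fun _ _ => rfl }

@[simp] theorem barL_apply (z : Eu (n + 1)) : barL n z = bar z := rfl

@[simp] theorem lastL_apply (z : Eu (n + 1)) : lastL n z = lastc z := rfl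

theorem bar_single_castSucc (k : Fin n) :
    bar (EuclideanSpace.single k.castSucc (1 : ℝ)) = EuclideanSpace.single k 1 := by
  ext l
  simp [bar, PiLp.single_apply, Fin.castSucc_inj]

theorem bar_single_last : bar (EuclideanSpace.single (Fin.last n) (1 : ℝ)) = 0 := by
  ext l
  simp [bar]

theorem lastc_single_castSucc (k : Fin n) :
    lastc (EuclideanSpace.single k.castSucc (1 : ℝ)) = 0 := by
  simp [lastc]

theorem lastc_single_last : lastc (EuclideanSpace.single (Fin.last n) (1 : ℝ)) = 1 := by
  simp [lastc]

theorem perspLin_single_castSucc (y : Eu (n + 1)) (k : Fin n) :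
    perspLin (barL n) (lastL n) y (EuclideanSpace.single k.castSucc 1) =
      EuclideanSpace.single k 1 := by
  simp [perspLin, bar_single_castSucc, lastc_single_castSucc]

theorem perspLin_single_last (y : Eu (n + 1)) :
    perspLin (barL n) (lastL n) y (EuclideanSpace.single (Fin.last n) 1) =
      -persp (barL n) (lastL n) y := by
  simp [perspLin, bar_single_last, lastc_single_last]

theorem det_fromRows_clmToMatrix_perspLin (y : Eu (n + 1)) (ℓ : Eu n →L[ℝ] ℝ) (s : ℝ) :
    det ((fromRows (clmToMatrix (perspLin (barL n) (lastL n) y))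
      (replicateRow (Fin 1) fun j =>
        (ℓ ∘L perspLin (barL n) (lastL n) y + s • lastL n) (EuclideanSpace.single j 1))).submatrix
          id finSumFinEquiv) = s := by
  set x := persp (barL n) (lastL n) y
  have hinl : ∀ l : Fin n, finSumFinEquiv (Sum.inl l : Fin n ⊕ Fin 1) = l.castSucc :=
    fun _ => rfl
  have hinr : ∀ u : Fin 1, finSumFinEquiv (Sum.inr u : Fin n ⊕ Fin 1) = Fin.last n := fun u => by
    rw [Fin.fin_one_eq_zero u]
    rfl
  have hblocks : (fromRows (clmToMatrix (perspLin (barL n) (lastL n) y))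
      (replicateRow (Fin 1) fun j =>
        (ℓ ∘L perspLin (barL n) (lastL n) y + s • lastL n) (EuclideanSpace.single j 1))).submatrix
          id finSumFinEquiv =
      fromBlocks 1 (replicateCol (Fin 1) fun k => -x k)
        (replicateRow (Fin 1) fun l => ℓ (EuclideanSpace.single l 1)) (of fun _ _ => s - ℓ x) := by
    ext (k | _) (l | _) <;> simp only [submatrix_apply, id, hinl, hinr] <;>
      simp [clmToMatrix, perspLin_single_castSucc, perspLin_single_last, lastc_single_castSucc,
        lastc_single_last, one_apply, neg_add_eq_sub, x]
  rw [hblocks, det_fromBlocks_one₁₁, det_fin_one, ℓ.apply_eq_sum_single x]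
  simp [dotProduct, mul_comm]

end Coordinates

/-- If `v` is `C²` on an open `U ⊂ ℝⁿ`, `f` is `C²` on `ℝ`, and
`φ(y) = f(y_{n+1} v(ỹ))`, then at every `y` with `y_{n+1} > 0` and `ỹ ∈ U`,
`det D²φ(y) = f''(y_{n+1}v(ỹ)) (f'(y_{n+1}v(ỹ)))ⁿ v(ỹ)² y_{n+1}^{-n} det D²v(ỹ)`. -/
theorem det_hessian_separation_of_variables {n : ℕ} (U : Set (Eu n)) (hU : IsOpen U)
    (v : Eu n → ℝ) (hv : ContDiffOn ℝ 2 v U) (f : ℝ → ℝ) (hf : ContDiff ℝ 2 f)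
    (y : Eu (n + 1)) (hy : 0 < lastc y) (hyU : tilde y ∈ U) :
    (Hess (fun z => f (lastc z * v (tilde z))) y).det =
      deriv (deriv f) (lastc y * v (tilde y)) *
        (deriv f (lastc y * v (tilde y))) ^ n *
        (v (tilde y)) ^ 2 * ((lastc y) ^ n)⁻¹ * (Hess v (tilde y)).det := by
  have htilde : @tilde n = persp (barL n) (lastL n) := rfl
  have hlastc : @lastc n = lastL n := rfl
  rw [htilde] at hyU ⊢
  rw [hlastc] at hy ⊢
  have hvy : ContDiffAt ℝ 2 v (persp (barL n) (lastL n) y) := hv.contDiffAt (hU.mem_nhds hyU)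
  rw [hess_comp_perspective _ _ hy.ne' hvy hf.contDiffAt,
    (hasFDerivAt_perspective hy.ne' (hvy.differentiableAt two_ne_zero).hasFDerivAt).fderiv,
    det_smul_vecMulVec_add_smul_transpose_mul_mul finSumFinEquiv,
    det_fromRows_clmToMatrix_perspLin, Fintype.card_fin, mul_pow, inv_pow]
  ring
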